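/- arXiv:1609.00674 — 4 statements merged into one kernel-verified Lean document; each statement's English description precedes it below -/
import Mathlib

section
/- Let G = (V, E) be a graph represented by a k-uniform word w, and let v ∈ V. Then the neighbourhood N(v) of v is splittable with respect to w: there is a cyclic shift of w whose subword induced by N(v) is a concatenation P₁⋯P_k, where each P_i contains every element of N(v) exactly once. -/
/-- Letters `x` and `y` alternate in the word `w`. -/
def Alternate {V : Type*} [DecidableEq V] (w : List V) (x y : V) : Prop :=
  (w.filter fun z => decide (z = x ∨ z = y)).Chain' (· ≠ ·)

/-- The word `w` represents the simple graph `G`. -/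
def Represents {V : Type*} [DecidableEq V] (w : List V) (G : SimpleGraph V) : Prop :=
  (∀ v : V, v ∈ w) ∧ ∀ x y : V, x ≠ y → (G.Adj x y ↔ Alternate w x y)

/-- Each letter of the alphabet occurs exactly `k` times in `w`. -/
def IsUniform {V : Type*} [DecidableEq V] (w : List V) (k : ℕ) : Prop :=
  ∀ v : V, w.count v = k

/-- The crown graph `H_{n,n}`. -/
def Crown (n : ℕ) : SimpleGraph (Fin n ⊕ Fin n) :=
  SimpleGraph.fromRel fun x y =>
    match x, y with
    | Sum.inl i, Sum.inr j => i ≠ j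
    | _, _ => False

/-- `P` is a permutation of the set `A`: each element of `A` occurs exactly once. -/
def IsPermOf {V : Type*} [DecidableEq V] (P : List V) (A : Finset V) : Prop :=
  (∀ a ∈ A, P.count a = 1) ∧ ∀ x ∈ P, x ∈ A

/-! Let `w = a ++ v :: b` with `v ∉ a` and rotate `w` to `b ++ a ++ [v]`. For a neighbour `x`
of `v`, the `{v, x}`-subword of `w` alternates and contains `k` copies of each letter, so the
`{v, x}`-subword of the rotation is `(x v)ᵏ`: exactly one `x` precedes the first `v` and exactly
one lies between any two consecutive `v`s. Cutting the rotation after each of its `k` letters `v`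
thus gives `k` blocks whose `N(v)`-subwords are permutations of `N(v)`. -/

lemma List.append_cons_inj_of_notMem_left {α : Type*} [DecidableEq α] {x₁ x₂ z₁ z₂ : List α}
    {a : α} (h₁ : a ∉ x₁) (h₂ : a ∉ x₂) (h : x₁ ++ a :: z₁ = x₂ ++ a :: z₂) :
    x₁ = x₂ ∧ z₁ = z₂ := by
  have hlen : x₁.length = x₂.length := by
    simpa [List.idxOf_append_of_notMem, h₁, h₂] using congrArg (List.idxOf a) h
  obtain ⟨hx, hz⟩ := List.append_inj h hlen
  exact ⟨hx, (List.cons.inj hz).2⟩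

section AlternatingWords

variable {V : Type*}

def altPow (x v : V) : ℕ → List V
  | 0 => []
  | n + 1 => x :: v :: altPow x v n

lemma altPow_append_pair (x v : V) (n : ℕ) : altPow x v n ++ [x, v] = altPow x v (n + 1) := by
  induction n with
  | zero => rfl
  | succ n ih => simp only [altPow, List.cons_append, ih]

lemma exists_eq_altPow_of_isChain {x v : V} :
    ∀ {l : List V}, (∀ z ∈ l, z = v ∨ z = x) → (v :: l).IsChain (· ≠ ·) →
      ∃ n, l = altPow x v n ∨ l = altPow x v n ++ [x]
  | [], _, _ => ⟨0, .inl rfl⟩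
  | [a], hl, hc => by
    obtain rfl : a = x := (hl a (by simp)).resolve_left (List.isChain_pair.mp hc).symm
    exact ⟨0, .inr rfl⟩
  | a :: b :: t, hl, hc => by
    obtain ⟨hva, hab, hc'⟩ := List.isChain_cons_cons.mp hc |>.imp_right List.isChain_cons_cons.mp
    obtain rfl : a = x := (hl a (by simp)).resolve_left hva.symm
    obtain rfl : b = v := (hl b (by simp)).resolve_right hab.symm
    obtain ⟨n, h⟩ := exists_eq_altPow_of_isChain (fun z hz => hl z (by simp [hz])) hc'
    exact ⟨n + 1, by rcases h with rfl | rfl <;> simp [altPow]⟩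

variable [DecidableEq V]

lemma count_altPow_left {x v : V} (h : x ≠ v) (n : ℕ) : (altPow x v n).count x = n := by
  induction n with
  | zero => rfl
  | succ n ih => simp [altPow, h.symm, ih]

lemma count_altPow_right {x v : V} (h : x ≠ v) (n : ℕ) : (altPow x v n).count v = n := by
  induction n with
  | zero => rfl
  | succ n ih => simp [altPow, h, ih]

lemma filter_rotate_eq_altPow {x v : V} (hxv : x ≠ v) {a b : List V} (hva : v ∉ a) {k : ℕ}
    (halt : Alternate (a ++ v :: b) v x)
    (hcx : (a ++ v :: b).count x = k) (hcv : (a ++ v :: b).count v = k) :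
    (b ++ (a ++ [v])).filter (fun z => decide (z = v ∨ z = x)) = altPow x v k := by
  set p : V → Bool := fun z => decide (z = v ∨ z = x)
  have hpv : p v := by simp [p]
  have hpx : p x := by simp [p]
  have hfa : a.filter p = List.replicate (a.count x) x := by
    rw [← List.filter_beq]
    refine List.filter_congr fun z hz => ?_
    have hzv : z ≠ v := fun h => hva (h ▸ hz)
    simp [p, hzv, beq_eq_decide]
  have hchain : (v :: b.filter p).IsChain (· ≠ ·) := by
    have : ((a ++ v :: b).filter p).IsChain (· ≠ ·) := halt
    rw [List.filter_append, List.filter_cons_of_pos hpv] at this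
    exact this.right_of_append
  have hcx' : a.count x + (b.filter p).count x = k := by
    rw [List.count_filter hpx, ← hcx]; simp [hxv.symm]
  have hcv' : (b.filter p).count v + 1 = k := by
    rw [List.count_filter hpv, ← hcv, List.count_append, List.count_eq_zero_of_not_mem hva]
    simp
  rw [List.filter_append, List.filter_append, hfa, List.filter_singleton, hpv]
  obtain ⟨n, hb | hb⟩ :=
    exists_eq_altPow_of_isChain (fun z hz => by simpa [p] using List.of_mem_filter hz) hchain
  · obtain ⟨h1, rfl⟩ : a.count x = 1 ∧ k = n + 1 := by
      simp only [hb, count_altPow_left hxv, count_altPow_right hxv] at hcx' hcv'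
      omega
    simp [hb, h1, ← altPow_append_pair]
  · obtain ⟨h0, rfl⟩ : a.count x = 0 ∧ k = n + 1 := by
      simp [hb, count_altPow_left hxv, count_altPow_right hxv, hxv] at hcx' hcv'
      omega
    simp [hb, h0, ← altPow_append_pair]

lemma isPermOf_filter_mem {A : Finset V} {c : List V} (h : ∀ a ∈ A, c.count a = 1) :
    IsPermOf (c.filter fun z => decide (z ∈ A)) A :=
  ⟨fun a ha => by rw [List.count_filter (by simpa using ha), h a ha],
    fun z hz => by simpa using List.of_mem_filter hz⟩

lemma exists_isPermOf_of_filter_eq_altPow {v : V} {A : Finset V} (hv : v ∉ A) :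
    ∀ {k : ℕ} {c : List V}, c.count v = k →
      (∀ x ∈ A, c.filter (fun z => decide (z = v ∨ z = x)) = altPow x v k) →
      ∃ P : Fin k → List V, (∀ i, IsPermOf (P i) A) ∧
        c.filter (fun z => decide (z ∈ A)) = (List.ofFn P).flatten
  | 0, c, _, hc => by
    refine ⟨Fin.elim0, fun i => i.elim0, ?_⟩
    rw [List.ofFn_zero, List.flatten_nil, List.filter_eq_nil_iff]
    intro z hz hzA
    have hmem : z ∈ c.filter (fun y => decide (y = v ∨ y = z)) := List.mem_filter.mpr ⟨hz, by simp⟩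
    rw [hc z (by simpa using hzA)] at hmem
    exact List.not_mem_nil hmem
  | k + 1, c, hcv, hc => by
    have hvc : v ∈ c := List.count_pos_iff.mp (by omega)
    obtain ⟨c₁, c₂, rfl, hvc₁⟩ := List.eq_append_cons_of_mem hvc
    have hblock : ∀ x ∈ A, c₁.filter (fun z => decide (z = v ∨ z = x)) = [x] ∧
        c₂.filter (fun z => decide (z = v ∨ z = x)) = altPow x v k := by
      intro x hx
      have h := hc x hx
      rw [List.filter_append, List.filter_cons_of_pos (by simp)] at h
      have hxv : x ≠ v := fun h => hv (h ▸ hx)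
      exact List.append_cons_inj_of_notMem_left (x₂ := [x])
        (fun h => hvc₁ (List.mem_of_mem_filter h)) (by simpa using hxv.symm) h
    obtain ⟨P, hP, hflat⟩ := exists_isPermOf_of_filter_eq_altPow hv
      (by simpa [List.count_append, List.count_eq_zero_of_not_mem hvc₁] using hcv)
      (fun x hx => (hblock x hx).2)
    have hperm : IsPermOf (c₁.filter fun z => decide (z ∈ A)) A := by
      refine isPermOf_filter_mem fun a ha => ?_
      rw [← List.count_filter (p := fun z => decide (z = v ∨ z = a)) (by simp), (hblock a ha).1]
      simp
    refine ⟨Fin.cons _ P, Fin.cases hperm hP, ?_⟩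
    rw [List.filter_append, List.filter_cons_of_neg (by simpa using hv), List.ofFn_succ,
      List.flatten_cons, hflat]
    rfl

end AlternatingWords

/-- The neighbourhood of any vertex is splittable: some cyclic shift of `w` has
its subword induced by `N(v)` equal to a concatenation of `k` permutations of `N(v)`. -/
theorem neighborhood_splittable {V : Type*} [Fintype V] [DecidableEq V]
    (G : SimpleGraph V) [DecidableRel G.Adj] (w : List V) (k : ℕ)
    (hk : IsUniform w k) (hrep : Represents w G) (v : V) :
    ∃ u u' : List V, w = u ++ u' ∧
      ∃ P : Fin k → List V, (∀ i, IsPermOf (P i) (G.neighborFinset v)) ∧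
        ((u' ++ u).filter fun z => decide (z ∈ G.neighborFinset v)) =
          (List.ofFn P).flatten := by
  obtain ⟨a, b, rfl, hva⟩ := List.eq_append_cons_of_mem (hrep.1 v)
  refine ⟨a ++ [v], b, by simp, ?_⟩
  have hcount : (b ++ (a ++ [v])).count v = k := by
    rw [List.perm_append_comm.count_eq, ← hk v]
    simp
  refine exists_isPermOf_of_filter_eq_altPow (by simp) hcount fun x hx => ?_
  have hadj : G.Adj v x := (G.mem_neighborFinset v x).mp hx
  exact filter_rotate_eq_altPow hadj.ne.symm hva ((hrep.2 v x hadj.ne).mp hadj) (hk x) (hk v)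
end

section
/- Let w be a k-uniform word representing a graph G = (V, E), and let A ⊆ V be such that the subword of w induced by A is a concatenation P₁⋯P_k in which each P_i contains every element of A exactly once. Suppose a, b ∈ A, x ∉ A, {a, x} ∈ E and {b, x} ∈ E. If the first occurrence of a in w precedes the first occurrence of x in w, which in turn precedes the first occurrence of b in w, then {a, b} ∈ E. -/
/-! For letters `x ≠ y`, the word `y :: w` alternates in `x` and `y` exactly when every prefix
of `w` contains as many `y`s as `x`s, or one `x` more. Alternation of `a` with `x` and of `x`
with `b`, with first occurrences in the order `a`, `x`, `b`, gives `#b ≤ #x ≤ #a` on every prefix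
of `w`; since each block `P i` contains `a` and `b` once, also `#a ≤ #b + 1`. So `a` and `b` meet
the prefix criterion and alternate. -/

open List

theorem List.forall_prefix_cons {α : Type*} {P : List α → Prop} {c : α} {w : List α} :
    (∀ p, p <+: c :: w → P p) ↔ P [] ∧ ∀ p, p <+: w → P (c :: p) := by
  simp only [prefix_cons_iff]
  constructor
  · exact fun h => ⟨h [] (.inl rfl), fun p hp => h _ (.inr ⟨p, rfl, hp⟩)⟩
  · rintro ⟨hnil, hcons⟩ p (rfl | ⟨t, rfl, ht⟩)
    exacts [hnil, hcons t ht]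

theorem List.count_le_count_add_one_of_prefix_flatten {α : Type*} [BEq α] {a b : α}
    {L : List (List α)} (hL : ∀ B ∈ L, B.count a ≤ 1 ∧ 1 ≤ B.count b) {q : List α}
    (hq : q <+: L.flatten) : q.count a ≤ q.count b + 1 := by
  induction L generalizing q with
  | nil => simp_all
  | cons B L ih =>
    obtain ⟨haB, hbB⟩ := hL B mem_cons_self
    rw [flatten_cons] at hq
    rcases prefix_or_prefix_of_prefix hq (prefix_append B L.flatten) with hqB | ⟨t, rfl⟩
    · have := hqB.sublist.count_le a
      omega
    · rw [prefix_append_right_inj] at hq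
      have := ih (fun C hC => hL C (mem_cons_of_mem B hC)) hq
      simp only [count_append]
      omega

section Alternate

variable {α : Type*} [DecidableEq α] {x y : α}

theorem alternate_iff_isChain {w : List α} :
    Alternate w x y ↔ (w.filter fun z => decide (z = x ∨ z = y)).IsChain (· ≠ ·) :=
  Iff.rfl

theorem alternate_comm {w : List α} : Alternate w x y ↔ Alternate w y x := by
  simp only [alternate_iff_isChain, or_comm]

theorem Alternate.of_cons {c : α} {w : List α} (h : Alternate (c :: w) x y) :
    Alternate w x y := by
  rw [alternate_iff_isChain, filter_cons] at *
  split at h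
  exacts [h.tail, h]

theorem alternate_cons_iff (hxy : x ≠ y) {w : List α} :
    Alternate (y :: w) x y ↔ ∀ p, p <+: w → p.count y ≤ p.count x ∧ p.count x ≤ p.count y + 1 := by
  induction w generalizing x y with
  | nil => simp [alternate_iff_isChain]
  | cons c w ih =>
    rw [forall_prefix_cons]
    by_cases hcy : c = y
    · subst hcy
      refine iff_of_false (by simp [alternate_iff_isChain]) fun h => ?_
      exact hxy (by simpa using (h.2 [] nil_prefix).1)
    by_cases hcx : c = x
    · subst hcx
      have hstep : Alternate (y :: c :: w) c y ↔ Alternate (c :: w) y c := by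
        simp [alternate_iff_isChain, hxy.symm, or_comm]
      have hcount (p : List α) : (p.count c ≤ p.count y ∧ p.count y ≤ p.count c + 1) ↔
          ((c :: p).count y ≤ (c :: p).count c ∧ (c :: p).count c ≤ (c :: p).count y + 1) := by
        simp only [count_cons_self, count_cons_of_ne hxy]
        omega
      simp [hstep, ih hxy.symm, hcount]
    · have hstep : Alternate (y :: c :: w) x y ↔ Alternate (y :: w) x y := by
        simp [alternate_iff_isChain, hcx, hcy]
      simp [hstep, ih hxy, count_cons_of_ne hcx, count_cons_of_ne hcy]

theorem Alternate.cons_of_idxOf_lt {w : List α} (h : Alternate w x y)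
    (hlt : w.idxOf x < w.idxOf y) : Alternate (y :: w) x y := by
  induction w with
  | nil => simp at hlt
  | cons c w ih =>
    by_cases hcx : c = x
    · subst hcx
      have hxy : c ≠ y := by rintro rfl; simp at hlt
      simpa [alternate_iff_isChain, hxy, hxy.symm] using h
    by_cases hcy : c = y
    · subst hcy; simp at hlt
    rw [idxOf_cons_ne _ hcx, idxOf_cons_ne _ hcy] at hlt
    have hw : Alternate w x y := by simpa [alternate_iff_isChain, hcx, hcy] using h
    simpa [alternate_iff_isChain, hcx, hcy] using ih hw (Nat.succ_lt_succ_iff.mp hlt)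

end Alternate

theorem splittable_between_adjacent_general {V : Type*} [DecidableEq V]
    (G : SimpleGraph V) (w : List V) (k : ℕ)
    (hrep : Represents w G)
    (A : Finset V) (P : Fin k → List V)
    (hP : ∀ i, IsPermOf (P i) A)
    (hind : (w.filter fun z => decide (z ∈ A)) = (List.ofFn P).flatten)
    (a b x : V) (ha : a ∈ A) (hb : b ∈ A)
    (hax : G.Adj a x) (hbx : G.Adj b x)
    (h1 : w.idxOf a < w.idxOf x) (h2 : w.idxOf x < w.idxOf b) :
    G.Adj a b := by
  obtain ⟨-, hadj⟩ := hrep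
  have hab : a ≠ b := by rintro rfl; omega
  have hcount_ax := (alternate_cons_iff hax.ne).1
    (((hadj a x hax.ne).1 hax).cons_of_idxOf_lt h1)
  have hcount_xb := (alternate_cons_iff hbx.ne').1
    (((hadj x b hbx.ne').1 hbx.symm).cons_of_idxOf_lt h2)
  have hcount_ab (p : List V) (hp : p <+: w) : p.count a ≤ p.count b + 1 := by
    have hblocks : ∀ B ∈ List.ofFn P, B.count a ≤ 1 ∧ 1 ≤ B.count b :=
      forall_mem_ofFn_iff.2 fun i => by simp [(hP i).1 a ha, (hP i).1 b hb]
    have hpA : (p.filter fun z => decide (z ∈ A)) <+: (List.ofFn P).flatten :=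
      hind ▸ hp.filter _
    simpa [ha, hb] using count_le_count_add_one_of_prefix_flatten hblocks hpA
  refine (hadj a b hab).2 ((alternate_cons_iff hab).2 fun p hp => ?_).of_cons
  have := hcount_ax p hp
  have := hcount_xb p hp
  have := hcount_ab p hp
  omega

/-- Lemma 1 of the paper. If the subword of `w` induced by a splittable-style set
`A` is a concatenation of `k` permutations of `A`, `a, b ∈ A`, `x ∉ A`, both `a`
and `b` are adjacent to `x`, and the first occurrences satisfy `a₁ < x₁ < b₁`,
then `a` and `b` are adjacent. -/
theorem splittable_between_adjacent {V : Type*} [DecidableEq V]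
    (G : SimpleGraph V) (w : List V) (k : ℕ)
    (hk : IsUniform w k) (hrep : Represents w G)
    (A : Finset V) (P : Fin k → List V)
    (hP : ∀ i, IsPermOf (P i) A)
    (hind : (w.filter fun z => decide (z ∈ A)) = (List.ofFn P).flatten)
    (a b x : V) (ha : a ∈ A) (hb : b ∈ A) (hx : x ∉ A)
    (hax : G.Adj a x) (hbx : G.Adj b x)
    (h1 : w.idxOf a < w.idxOf x) (h2 : w.idxOf x < w.idxOf b) :
    G.Adj a b :=
  splittable_between_adjacent_general G w k hrep A P hP hind a b x ha hb hax hbx h1 h2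
end

section
/- Let n ≥ 5 and let w be a k-uniform word representing the crown graph H_{n,n}. Then the set A = {1, …, n} (one part of the bipartition) is splittable with respect to w: there is a cyclic shift of w whose subword induced by A is a concatenation P₁⋯P_k, where each P_i contains every element of A exactly once. -/
/-- The "left" part `{1, …, n}` of the vertex set of the crown graph `H_{n,n}`. -/
def leftSet (n : ℕ) : Finset (Fin n ⊕ Fin n) :=
  Finset.univ.filter fun z => z.isLeft

section Lists

variable {V : Type*} [DecidableEq V]

lemma isChain_filter_and_head_iff {a b : V} (hab : a ≠ b) (L : List V) :
    ((L.filter fun z => decide (z = a ∨ z = b)).IsChain (· ≠ ·) ∧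
      (L.filter fun z => decide (z = a ∨ z = b)).head? ≠ some b) ↔
    ∀ t, (L.take t).count b ≤ (L.take t).count a ∧
      (L.take t).count a ≤ (L.take t).count b + 1 := by
  induction L generalizing a b with
  | nil => simp
  | cons x L ih =>
    rw [← Nat.and_forall_add_one]
    simp only [List.take_zero, List.count_nil, List.take_succ_cons, le_refl, zero_le, and_self,
      true_and]
    by_cases hxa : x = a
    · subst hxa
      have hswap : (L.filter fun z => decide (z = x ∨ z = b)) =
          L.filter fun z => decide (z = b ∨ z = x) := by simp only [or_comm]
      have hhead (o : Option V) : (∀ y ∈ o, x ≠ y) ↔ o ≠ some x := by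
        cases o <;> simp [eq_comm]
      rw [List.filter_cons_of_pos (by simp), List.isChain_cons, List.head?_cons, hswap, hhead]
      simp only [List.count_cons_self, List.count_cons_of_ne hab, ne_eq, Option.some.injEq, hab,
        not_false_eq_true, and_true]
      rw [and_comm, ← ne_eq, ih hab.symm]
      exact forall_congr' fun t => by omega
    by_cases hxb : x = b
    · subst hxb
      refine iff_of_false (by simp) fun h => ?_
      simpa [hxa] using (h 0).1
    · rw [List.filter_cons_of_neg (by simp [hxa, hxb]), ih hab]
      simp [List.count_cons_of_ne hxa, List.count_cons_of_ne hxb]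

lemma alternate_comm_s8 {w : List V} {a b : V} : Alternate w a b ↔ Alternate w b a := by
  simp only [Alternate, or_comm]

lemma IsUniform.count_eq {w : List V} {k : ℕ} (hk : IsUniform w k) (a b : V) :
    w.count a = w.count b :=
  (hk a).trans (hk b).symm

end Lists

namespace CyclicWord

variable {V : Type*} {w : List V}

/-- The `t`-th letter of the infinite periodic word `w w w ⋯` (`none` only when `w = []`). -/
def letter (w : List V) (t : ℕ) : Option V := w[t % w.length]?

lemma letter_add_mul_length (t c : ℕ) : letter w (t + w.length * c) = letter w t := by
  simp [letter]

lemma letter_of_lt {t : ℕ} (ht : t < w.length) : letter w t = w[t]? := by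
  simp [letter, Nat.mod_eq_of_lt ht]

lemma length_pos_of_letter_eq {t : ℕ} {v : V} (h : letter w t = some v) : 0 < w.length := by
  rcases w with _ | ⟨x, w⟩
  · simp [letter] at h
  · simp

lemma exists_letter_eq {v : V} (hv : v ∈ w) : ∃ p, letter w p = some v := by
  obtain ⟨p, hp, rfl⟩ := List.getElem_of_mem hv
  exact ⟨p, by rw [letter_of_lt hp, List.getElem?_eq_getElem hp]⟩

lemma letter_rotate (q t : ℕ) : letter (w.rotate q) t = letter w (q + t) := by
  rcases Nat.eq_zero_or_pos w.length with h | h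
  · simp [List.length_eq_zero_iff.mp h, letter]
  · rw [letter, List.length_rotate, List.getElem?_rotate (Nat.mod_lt _ h), letter,
      Nat.add_comm q, Nat.mod_add_mod]

variable [DecidableEq V]

/-- Occurrences of `v` among the first `t` letters of `w w w ⋯`. -/
def occ (w : List V) (v : V) : ℕ → ℕ
  | 0 => 0
  | t + 1 => occ w v t + if letter w t = some v then 1 else 0

def walk (w : List V) (a b : V) (t : ℕ) : ℤ := occ w a t - occ w b t

lemma occ_eq_count_take {v : V} {t : ℕ} (ht : t ≤ w.length) : occ w v t = (w.take t).count v := by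
  induction t with
  | zero => simp [occ]
  | succ t ih =>
    rw [occ, ih (by omega), letter_of_lt (by omega), List.take_add_one, List.count_append,
      List.getElem?_eq_getElem (by omega)]
    simp [List.count_singleton]

lemma count_take_eq_occ (v : V) (t : ℕ) : (w.take t).count v = occ w v (min t w.length) := by
  rw [occ_eq_count_take (min_le_right _ _), ← List.take_eq_take_min]

lemma occ_add_length (v : V) (t : ℕ) : occ w v (t + w.length) = occ w v t + w.count v := by
  induction t with
  | zero => simp [occ, occ_eq_count_take le_rfl]
  | succ t ih =>
    have := letter_add_mul_length (w := w) t 1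
    rw [Nat.mul_one] at this
    rw [Nat.add_right_comm, occ, ih, occ, this]
    ring

lemma occ_rotate (v : V) (q t : ℕ) : occ (w.rotate q) v t + occ w v q = occ w v (q + t) := by
  induction t with
  | zero => simp [occ]
  | succ t ih => rw [occ, ← Nat.add_assoc, occ, ← ih, letter_rotate]; ring

lemma walk_zero (a b : V) : walk w a b 0 = 0 := by simp [walk, occ]

lemma walk_self (a : V) (t : ℕ) : walk w a a t = 0 := sub_self _

lemma walk_swap (a b : V) (t : ℕ) : walk w b a t = - walk w a b t := by
  simp only [walk]; ring

lemma walk_sub_walk (a b c : V) (t : ℕ) : walk w a c t - walk w b c t = walk w a b t := by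
  simp only [walk]; ring

lemma walk_succ_of_letter_eq {a b : V} (hab : a ≠ b) {t : ℕ} (h : letter w t = some b) :
    walk w a b (t + 1) = walk w a b t - 1 := by
  simp [walk, occ, h, hab.symm]; ring

lemma walk_le_walk_succ {a b : V} {t : ℕ} (h : letter w t ≠ some b) :
    walk w a b t ≤ walk w a b (t + 1) := by
  simp only [walk, occ, h, if_false]
  split_ifs <;> push_cast <;> linarith

lemma walk_add_mul_length {a b : V} (hab : w.count a = w.count b) (t c : ℕ) :
    walk w a b (t + w.length * c) = walk w a b t := by
  induction c with
  | zero => simp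
  | succ c ih =>
    rw [Nat.mul_succ, ← Nat.add_assoc, ← ih]
    simp only [walk, occ_add_length, hab]
    push_cast; ring

lemma walk_mod_length {a b : V} (hab : w.count a = w.count b) (t : ℕ) :
    walk w a b (t % w.length) = walk w a b t := by
  conv_rhs => rw [← Nat.mod_add_div t w.length]
  rw [walk_add_mul_length hab]

lemma forall_count_take_iff_walk (a b : V) :
    (∀ t, (w.take t).count b ≤ (w.take t).count a ∧
      (w.take t).count a ≤ (w.take t).count b + 1) ↔
    ∀ t ≤ w.length, walk w a b t = 0 ∨ walk w a b t = 1 := by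
  simp only [count_take_eq_occ, walk]
  constructor
  · intro h t ht
    have := h t
    rw [min_eq_left ht] at this
    omega
  · intro h t
    have := h _ (min_le_right t w.length)
    omega

theorem alternate_iff_walk {a b : V} (hab : a ≠ b) :
    Alternate w a b ↔ ∃ z, ∀ t ≤ w.length, walk w a b t = z ∨ walk w a b t = z + 1 := by
  constructor
  · intro h
    by_cases hb : (w.filter fun z => decide (z = a ∨ z = b)).head? = some b
    · have hba : (w.filter fun z => decide (z = b ∨ z = a)).head? ≠ some a := by
        rw [show (w.filter fun z => decide (z = b ∨ z = a)) =
          w.filter fun z => decide (z = a ∨ z = b) by simp only [or_comm], hb]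
        simpa using hab.symm
      have := (forall_count_take_iff_walk b a).mp
        ((isChain_filter_and_head_iff hab.symm w).mp ⟨alternate_comm_s8.mp h, hba⟩)
      refine ⟨-1, fun t ht => ?_⟩
      have := this t ht
      rw [walk_swap] at this
      omega
    · exact ⟨0, (forall_count_take_iff_walk a b).mp
        ((isChain_filter_and_head_iff hab w).mp ⟨h, hb⟩)⟩
  · rintro ⟨z, hz⟩
    have h0 := hz 0 (Nat.zero_le _)
    rw [walk_zero] at h0
    rcases h0 with rfl | h0
    · exact ((isChain_filter_and_head_iff hab w).mpr ((forall_count_take_iff_walk a b).mpr hz)).1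
    · refine alternate_comm_s8.mpr ((isChain_filter_and_head_iff hab.symm w).mpr
        ((forall_count_take_iff_walk b a).mpr fun t ht => ?_)).1
      rw [walk_swap]
      have := hz t ht
      omega

theorem walk_le_of_alternate {a b : V} (hab : a ≠ b) (halt : Alternate w a b)
    (hcount : w.count a = w.count b) {p : ℕ} (hp : letter w p = some b) (t : ℕ) :
    walk w a b t ≤ walk w a b p ∧ walk w a b p ≤ walk w a b t + 1 := by
  obtain ⟨z, hz⟩ := (alternate_iff_walk hab).mp halt
  have hz' (s : ℕ) : walk w a b s = z ∨ walk w a b s = z + 1 := by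
    rw [← walk_mod_length hcount]
    exact hz _ (Nat.mod_lt _ (length_pos_of_letter_eq hp)).le
  have := walk_succ_of_letter_eq hab hp
  have := hz' p
  have := hz' (p + 1)
  have := hz' t
  omega

theorem alternate_of_walk_le_of_ne {a b : V} (hab : a ≠ b) (hcount : w.count a = w.count b)
    {U : ℤ} (hU : ∀ p, letter w p = some b → walk w a b p ≤ U ∧ walk w a b p ≠ U - 1)
    {p₀ : ℕ} (hp₀ : letter w p₀ = some b) (hU₀ : walk w a b p₀ = U) : Alternate w a b := by
  have hpos := length_pos_of_letter_eq hp₀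
  -- The walk does not decrease between occurrences of `b`.
  have upper : ∀ d t, letter w (t + d) = some b → walk w a b t ≤ U := by
    intro d
    induction d with
    | zero => exact fun t ht => (hU t ht).1
    | succ d ih =>
      intro t ht
      by_cases hb : letter w t = some b
      · exact (hU t hb).1
      · exact (walk_le_walk_succ hb).trans (ih (t + 1) (by rwa [Nat.add_right_comm]))
  have lower : ∀ d, U - 1 ≤ walk w a b (p₀ + d) := by
    intro d
    induction d with
    | zero => simp [hU₀]
    | succ d ih =>
      rw [← Nat.add_assoc]
      by_cases hb : letter w (p₀ + d) = some b
      · have := hU _ hb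
        rw [walk_succ_of_letter_eq hab hb]
        omega
      · exact ih.trans (walk_le_walk_succ hb)
  refine (alternate_iff_walk hab).mpr ⟨U - 1, fun t _ => ?_⟩
  have ht : t ≤ p₀ + w.length * t := le_add_left (Nat.le_mul_of_pos_left t hpos)
  have hp : p₀ ≤ t + w.length * p₀ := le_add_left (Nat.le_mul_of_pos_left p₀ hpos)
  have h₁ := upper (p₀ + w.length * t - t) t
    (by rw [Nat.add_sub_cancel' ht, letter_add_mul_length, hp₀])
  have h₂ := lower (t + w.length * p₀ - p₀)
  rw [Nat.add_sub_cancel' hp, walk_add_mul_length hcount] at h₂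
  omega

theorem eq_of_abs_walk_sub_le_one {a b : V} (hab : a ≠ b) (h : ¬ Alternate w a b) {z z' : ℤ}
    (hz : ∀ t, |walk w a b t - z| ≤ 1) (hz' : ∀ t, |walk w a b t - z'| ≤ 1) : z = z' := by
  simp only [alternate_iff_walk hab, not_exists, not_forall, not_or] at h
  obtain ⟨t, -, ht⟩ := h z
  obtain ⟨t', -, ht'⟩ := h z'
  have := abs_le.mp (hz t)
  have := abs_le.mp (hz' t)
  have := abs_le.mp (hz t')
  have := abs_le.mp (hz' t')
  omega

end CyclicWord

section Blocks

variable {V : Type*}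

lemma exists_take_filter_eq (p : V → Bool) (L : List V) (s : ℕ) :
    ∃ t, (L.filter p).take s = (L.take t).filter p := by
  induction L generalizing s with
  | nil => exact ⟨0, by simp⟩
  | cons x L ih =>
    by_cases hx : p x
    · cases s with
      | zero => exact ⟨0, by simp⟩
      | succ s =>
        obtain ⟨t, ht⟩ := ih s
        exact ⟨t + 1, by simp [List.filter_cons_of_pos hx, ht]⟩
    · obtain ⟨t, ht⟩ := ih s
      exact ⟨t + 1, by simp [List.filter_cons_of_neg hx, ht]⟩

lemma flatten_ofFn_take_drop (m : ℕ) :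
    ∀ (k : ℕ) (l : List V), l.length = m * k →
      (List.ofFn fun i : Fin k => (l.drop (m * i)).take m).flatten = l := by
  intro k
  induction k with
  | zero => simp
  | succ k ih =>
    intro l hl
    have hrest : (List.ofFn fun i : Fin k => (l.drop (m * (i + 1 : ℕ))).take m) =
        List.ofFn fun i : Fin k => ((l.drop m).drop (m * i)).take m := by
      simp only [List.drop_drop, Nat.mul_succ, Nat.add_comm]
    rw [List.ofFn_succ, List.flatten_cons]
    simp only [Fin.val_zero, Nat.mul_zero, List.drop_zero, Fin.val_succ]
    rw [hrest, ih _ (by simp [hl, Nat.mul_succ]), List.take_append_drop]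

lemma eq_of_sum_eq_card_mul {ι : Type*} {A : Finset ι} {c : ι → ℕ} {T : ℕ}
    (hsum : ∑ a ∈ A, c a = A.card * T) (hbal : ∀ a ∈ A, ∀ b ∈ A, c a ≤ c b + 1)
    {a : ι} (ha : a ∈ A) : c a = T := by
  rcases lt_trichotomy (c a) T with h | h | h
  · have : ∑ b ∈ A, c b < ∑ _b ∈ A, T :=
      Finset.sum_lt_sum (fun b hb => by have := hbal b hb a ha; omega) ⟨a, ha, h⟩
    simp [hsum] at this
  · exact h
  · have : ∑ _b ∈ A, T < ∑ b ∈ A, c b :=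
      Finset.sum_lt_sum (fun b hb => by have := hbal a ha b hb; omega) ⟨a, ha, h⟩
    simp [hsum] at this

theorem exists_isPermOf_blocks [DecidableEq V] {A : Finset V} {k : ℕ} {r : List V}
    (hcount : ∀ a ∈ A, r.count a = k)
    (hbal : ∀ t, ∀ a ∈ A, ∀ b ∈ A, (r.take t).count a ≤ (r.take t).count b + 1) :
    ∃ P : Fin k → List V, (∀ i, IsPermOf (P i) A) ∧
      r.filter (fun z => decide (z ∈ A)) = (List.ofFn P).flatten := by
  set F := r.filter (fun z => decide (z ∈ A))
  have hFA : ∀ x ∈ F, x ∈ A := fun x hx => by simpa using List.of_mem_filter hx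
  have hlen (s : ℕ) : (F.take s).length = ∑ a ∈ A, (F.take s).count a := by
    simpa using (Multiset.sum_count_eq_card (s := A) (m := (F.take s : Multiset V))
      fun x hx => hFA x (List.mem_of_mem_take hx)).symm
  have hFlen : F.length = A.card * k := by
    have hFcount : ∀ a ∈ A, F.count a = k := fun a ha => by simp [F, ha, hcount a ha]
    rw [← List.take_length (l := F), hlen, List.take_length, Finset.sum_congr rfl hFcount]
    simp
  have hblock (T : ℕ) (hT : T ≤ k) {a : V} (ha : a ∈ A) : (F.take (A.card * T)).count a = T := by
    obtain ⟨t, ht⟩ : ∃ t, F.take (A.card * T) = (r.take t).filter fun z => decide (z ∈ A) :=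
      exists_take_filter_eq _ r _
    refine eq_of_sum_eq_card_mul (c := fun a => (F.take (A.card * T)).count a) ?_ ?_ ha
    · rw [← hlen, List.length_take, hFlen, min_eq_left (Nat.mul_le_mul_left _ hT)]
    · intro a ha b hb
      simpa [ht, ha, hb] using hbal t a ha b hb
  refine ⟨fun i => (F.drop (A.card * i)).take A.card, fun i => ⟨fun a ha => ?_, fun x hx => ?_⟩,
    (flatten_ofFn_take_drop _ _ F hFlen).symm⟩
  · have hsplit := hblock (i + 1) i.isLt ha
    rw [Nat.mul_succ, List.take_add, List.count_append, hblock i i.isLt.le ha] at hsplit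
    simpa using hsplit
  · exact hFA x (List.mem_of_mem_drop (List.mem_of_mem_take hx))

end Blocks

namespace CyclicWord

variable {V : Type*} [DecidableEq V] {w : List V}

/-- Rotated to start at `q`, every prefix of `w` contains any two letters of `A` equally often
up to one. -/
def IsBalancedCut (w : List V) (A : Finset V) (q : ℕ) : Prop :=
  ∀ a ∈ A, ∀ b ∈ A, ∀ t, walk w a b t ≤ walk w a b q + 1

theorem IsBalancedCut.exists_rotate_blocks {A : Finset V} {q k : ℕ}
    (hq : IsBalancedCut w A q) (hcount : ∀ a ∈ A, w.count a = k) :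
    ∃ P : Fin k → List V, (∀ i, IsPermOf (P i) A) ∧
      (w.rotate q).filter (fun z => decide (z ∈ A)) = (List.ofFn P).flatten := by
  refine exists_isPermOf_blocks
    (fun a ha => ((List.rotate_perm w q).count_eq a).trans (hcount a ha)) fun t a ha b hb => ?_
  have hwalk := hq a ha b hb (q + min t (w.rotate q).length)
  simp only [walk, ← occ_rotate (w := w) _ q] at hwalk
  simp only [count_take_eq_occ]
  omega

end CyclicWord

lemma Crown.adj_inl_inr {n : ℕ} {i j : Fin n} : (Crown n).Adj (Sum.inl i) (Sum.inr j) ↔ i ≠ j := by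
  simp [Crown]

lemma Crown.not_adj_inl_inl {n : ℕ} {i j : Fin n} : ¬ (Crown n).Adj (Sum.inl i) (Sum.inl j) := by
  simp [Crown]

lemma mem_leftSet {n : ℕ} {z : Fin n ⊕ Fin n} : z ∈ leftSet n ↔ ∃ i, z = Sum.inl i := by
  simp [leftSet, Sum.isLeft_iff]

lemma Fin.exists_ne_ne_ne {n : ℕ} (hn : 4 ≤ n) (a b c : Fin n) : ∃ s, s ≠ a ∧ s ≠ b ∧ s ≠ c := by
  obtain ⟨s, -, hs⟩ := Finset.exists_mem_notMem_of_card_lt_card (s := {a, b, c})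
    (t := Finset.univ) (Finset.card_le_three.trans_lt (by simp; omega))
  exact ⟨s, by simp_all⟩

namespace Represents

variable {n : ℕ} {w : List (Fin n ⊕ Fin n)}

lemma alternate_inl_inr (hrep : Represents w (Crown n)) {i j : Fin n} (hij : i ≠ j) :
    Alternate w (Sum.inl i) (Sum.inr j) :=
  (hrep.2 _ _ Sum.inl_ne_inr).mp (Crown.adj_inl_inr.mpr hij)

lemma not_alternate_inl_inl (hrep : Represents w (Crown n)) {i j : Fin n} (hij : i ≠ j) :
    ¬ Alternate w (Sum.inl i) (Sum.inl j) :=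
  fun h => Crown.not_adj_inl_inl ((hrep.2 _ _ (by simpa using hij)).mpr h)

lemma not_alternate_inl_inr_self (hrep : Represents w (Crown n)) (i : Fin n) :
    ¬ Alternate w (Sum.inl i) (Sum.inr i) :=
  fun h => Crown.adj_inl_inr.mp ((hrep.2 _ _ Sum.inl_ne_inr).mpr h) rfl

end Represents

namespace CrownWord

open CyclicWord

variable {n k : ℕ} {w : List (Fin n ⊕ Fin n)}

/-- `r` is an occurrence of `y_s` for a common neighbour `y_s` of `x_i` and `x_j`. -/
def IsCommonNbrPos (w : List (Fin n ⊕ Fin n)) (i j : Fin n) (r : ℕ) : Prop :=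
  ∃ s, i ≠ s ∧ j ≠ s ∧ letter w r = some (Sum.inr s)

lemma exists_letter_eq_inr_ne (hrep : Represents w (Crown n)) (hn : 4 ≤ n) (a b c : Fin n) :
    ∃ r s, a ≠ s ∧ b ≠ s ∧ c ≠ s ∧ letter w r = some (Sum.inr s) := by
  obtain ⟨s, hsa, hsb, hsc⟩ := Fin.exists_ne_ne_ne hn a b c
  obtain ⟨r, hr⟩ := exists_letter_eq (hrep.1 (Sum.inr s))
  exact ⟨r, s, hsa.symm, hsb.symm, hsc.symm, hr⟩

lemma exists_isCommonNbrPos (hrep : Represents w (Crown n)) (hn : 4 ≤ n) (i j : Fin n) :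
    ∃ r, IsCommonNbrPos w i j r :=
  let ⟨r, s, hi, hj, _, hr⟩ := exists_letter_eq_inr_ne hrep hn i j j
  ⟨r, s, hi, hj, hr⟩

lemma abs_walk_sub_le_of_isCommonNbrPos (hk : IsUniform w k) (hrep : Represents w (Crown n))
    {i j : Fin n} {p : ℕ} (hp : IsCommonNbrPos w i j p) (t : ℕ) :
    |walk w (.inl i) (.inl j) t - walk w (.inl i) (.inl j) p| ≤ 1 := by
  obtain ⟨s, hi, hj, hp⟩ := hp
  have hi' := walk_le_of_alternate Sum.inl_ne_inr (hrep.alternate_inl_inr hi) (hk.count_eq _ _) hp t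
  have hj' := walk_le_of_alternate Sum.inl_ne_inr (hrep.alternate_inl_inr hj) (hk.count_eq _ _) hp t
  rw [← walk_sub_walk _ _ (Sum.inr s), ← walk_sub_walk _ _ (Sum.inr s) p, abs_le]
  omega

lemma walk_eq_of_isCommonNbrPos (hk : IsUniform w k) (hrep : Represents w (Crown n))
    {i j : Fin n} {p r : ℕ} (hp : IsCommonNbrPos w i j p) (hr : IsCommonNbrPos w i j r) :
    walk w (.inl i) (.inl j) p = walk w (.inl i) (.inl j) r := by
  rcases eq_or_ne i j with rfl | hij
  · simp [walk_self]
  exact eq_of_abs_walk_sub_le_one (Sum.inl_injective.ne hij) (hrep.not_alternate_inl_inl hij)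
    (abs_walk_sub_le_of_isCommonNbrPos hk hrep hp) (abs_walk_sub_le_of_isCommonNbrPos hk hrep hr)

lemma walk_inl_inr_eq (hk : IsUniform w k) (hrep : Represents w (Crown n)) {j m : Fin n}
    (hjm : j ≠ m) {p p' : ℕ} (hp : letter w p = some (.inr m)) (hp' : letter w p' = some (.inr m)) :
    walk w (.inl j) (.inr m) p = walk w (.inl j) (.inr m) p' := by
  have halt := hrep.alternate_inl_inr hjm
  exact le_antisymm (walk_le_of_alternate Sum.inl_ne_inr halt (hk.count_eq _ _) hp' p).1
    (walk_le_of_alternate Sum.inl_ne_inr halt (hk.count_eq _ _) hp p').1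

lemma walk_sub_eq_of_isCommonNbrPos (hk : IsUniform w k) (hrep : Represents w (Crown n))
    (hn : 4 ≤ n) {m j j' : Fin n} (hj : j ≠ m) (hj' : j' ≠ m) {p r r' : ℕ}
    (hp : letter w p = some (.inr m)) (hr : IsCommonNbrPos w m j r)
    (hr' : IsCommonNbrPos w m j' r') :
    walk w (.inl m) (.inl j) r - walk w (.inl m) (.inl j) p =
      walk w (.inl m) (.inl j') r' - walk w (.inl m) (.inl j') p := by
  obtain ⟨r'', s, hms, hjs, hj's, hr''⟩ := exists_letter_eq_inr_ne hrep hn m j j'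
  have e₁ := walk_eq_of_isCommonNbrPos hk hrep hr ⟨s, hms, hjs, hr''⟩
  have e₂ := walk_eq_of_isCommonNbrPos hk hrep hr' ⟨s, hms, hj's, hr''⟩
  have e₃ := walk_eq_of_isCommonNbrPos hk hrep (i := j') (j := j) ⟨s, hj's, hjs, hr''⟩
    ⟨m, hj', hj, hp⟩
  have a₁ := walk_sub_walk (w := w) (.inl m) (.inl j') (.inl j) r''
  have a₂ := walk_sub_walk (w := w) (.inl m) (.inl j') (.inl j) p
  linarith

lemma isBalancedCut_of_walk_eq (hk : IsUniform w k) (hrep : Represents w (Crown n)) (hn : 4 ≤ n)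
    {m j₀ : Fin n} (hj₀ : j₀ ≠ m) {p r₀ : ℕ} (hp : letter w p = some (.inr m))
    (hr₀ : IsCommonNbrPos w m j₀ r₀)
    (heq : walk w (.inl m) (.inl j₀) r₀ = walk w (.inl m) (.inl j₀) p) :
    IsBalancedCut w (leftSet n) p := by
  have hm (j : Fin n) (t : ℕ) :
      |walk w (.inl m) (.inl j) t - walk w (.inl m) (.inl j) p| ≤ 1 := by
    rcases eq_or_ne j m with rfl | hj
    · simp [walk_self]
    obtain ⟨r, hr⟩ := exists_isCommonNbrPos hrep hn m j
    have hoff := walk_sub_eq_of_isCommonNbrPos hk hrep hn hj hj₀ hp hr hr₀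
    have := abs_walk_sub_le_of_isCommonNbrPos hk hrep hr t
    rw [abs_le] at this ⊢
    constructor <;> linarith
  simp only [IsBalancedCut, mem_leftSet]
  rintro _ ⟨i, rfl⟩ _ ⟨j, rfl⟩ t
  by_cases hi : i = m
  · subst hi
    linarith [(abs_le.mp (hm j t)).2]
  by_cases hj : j = m
  · subst hj
    rw [walk_swap, walk_swap (t := p)]
    linarith [(abs_le.mp (hm i t)).1]
  · linarith [(abs_le.mp (abs_walk_sub_le_of_isCommonNbrPos hk hrep ⟨m, hi, hj, hp⟩ t)).2]

lemma exists_walk_eq (hk : IsUniform w k) (hrep : Represents w (Crown n)) {m j₀ : Fin n}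
    (hj₀ : j₀ ≠ m) {r₀ : ℕ} (hr₀ : IsCommonNbrPos w m j₀ r₀) :
    ∃ p, letter w p = some (.inr m) ∧
      walk w (.inl m) (.inl j₀) r₀ = walk w (.inl m) (.inl j₀) p := by
  by_contra! hne
  obtain ⟨p₀, hp₀⟩ := exists_letter_eq (hrep.1 (.inr m))
  set c := walk w (.inl m) (.inl j₀) r₀ + walk w (.inl j₀) (.inr m) p₀
  have hval (p : ℕ) (hp : letter w p = some (.inr m)) :
      walk w (.inl m) (.inr m) p = c - 1 ∨ walk w (.inl m) (.inr m) p = c + 1 := by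
    have h₁ := abs_le.mp (abs_walk_sub_le_of_isCommonNbrPos hk hrep hr₀ p)
    have h₂ := hne p hp
    have h₃ := walk_sub_walk (w := w) (.inl m) (.inl j₀) (.inr m) p
    have h₄ := walk_inl_inr_eq hk hrep hj₀ hp hp₀
    omega
  -- Skipping `c` at every `y_m` confines the walk of `(x_m, y_m)` to two values.
  apply hrep.not_alternate_inl_inr_self m
  by_cases hup : ∃ p, letter w p = some (.inr m) ∧ walk w (.inl m) (.inr m) p = c + 1
  · obtain ⟨p₁, hp₁, hc⟩ := hup
    exact alternate_of_walk_le_of_ne Sum.inl_ne_inr (hk.count_eq _ _)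
      (fun p hp => by have := hval p hp; omega) hp₁ hc
  · push Not at hup
    have h₀ := hval p₀ hp₀
    have h₀' := hup p₀ hp₀
    exact alternate_of_walk_le_of_ne Sum.inl_ne_inr (hk.count_eq _ _) (U := c - 1)
      (fun p hp => by have := hval p hp; have := hup p hp; omega) hp₀ (by omega)

theorem exists_isBalancedCut (hk : IsUniform w k) (hrep : Represents w (Crown n)) (hn : 4 ≤ n) :
    ∃ q, IsBalancedCut w (leftSet n) q := by
  let m : Fin n := ⟨0, by omega⟩
  obtain ⟨j₀, hj₀, -, -⟩ := Fin.exists_ne_ne_ne hn m m m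
  obtain ⟨r₀, hr₀⟩ := exists_isCommonNbrPos hrep hn m j₀
  obtain ⟨p, hp, heq⟩ := exists_walk_eq hk hrep hj₀ hr₀
  exact ⟨p, isBalancedCut_of_walk_eq hk hrep hn hj₀ hp hr₀ heq⟩

end CrownWord

/-- Lemma 2 of the paper: for `n ≥ 5`, in any `k`-uniform word representing
`H_{n,n}`, the part `A = {1, …, n}` is splittable: some cyclic shift of `w` has
its subword induced by `A` equal to a concatenation of `k` permutations of `A`. -/
theorem crown_left_part_splittable (n k : ℕ) (hn : 5 ≤ n)
    (w : List (Fin n ⊕ Fin n)) (hk : IsUniform w k) (hrep : Represents w (Crown n)) :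
    ∃ u u' : List (Fin n ⊕ Fin n), w = u ++ u' ∧
      ∃ P : Fin k → List (Fin n ⊕ Fin n),
        (∀ i, IsPermOf (P i) (leftSet n)) ∧
        ((u' ++ u).filter fun z => decide (z ∈ leftSet n)) = (List.ofFn P).flatten := by
  obtain ⟨q, hq⟩ := CrownWord.exists_isBalancedCut hk hrep (by omega)
  refine ⟨w.take (q % w.length), w.drop (q % w.length), (List.take_append_drop _ _).symm, ?_⟩
  rw [← List.rotate_eq_drop_append_take_mod]
  exact hq.exists_rotate_blocks fun a _ => hk a
end

section
/- Let n ≥ 5, let w be a k-uniform word representing the crown graph H_{n,n} whose first letter belongs to B = {2, …, n}, and suppose the subword of w induced by B is a concatenation P′₁⋯P′_k in which each P′_i contains every element of B exactly once. Then for all t ≥ 1 and i ≥ 1 with i + t − 1 ≤ k, the factor of w that starts at the position of the first letter of P′_i and ends at the position of the last letter of P′_{i+t−1} contains at most t occurrences of the letter 1. -/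
/-- The position (index in `w`) of the `(m+1)`-st letter of `w` (counting from
left to right) that satisfies the predicate `p`. -/
def nthPosWhere {V : Type*} (w : List V) (p : V → Bool) (m : ℕ) : ℕ :=
  (((List.range w.length).filter fun q => w[q]?.any p).getD m 0)

/-!
Choose a right vertex `x` adjacent to `1`, to the first letter `b₁` of `P′ᵢ` and to the last
letter `b₂` of `P′_{i+t-1}`. As `x` alternates with `b₁` and `b₂`, it occurs at most `t` times in
the factor, and exactly `t` times only if the alternations read `b₁ x b₁ x …` and `x b₂ x b₂ …`.
Then no prefix contains more `b₂`s than `b₁`s, and since the permutation blocks keep the counts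
of any two letters of `B` within one of each other, `b₁` and `b₂` would alternate: impossible for
two distinct left vertices of the crown, and contradictory at the position of `b₁` if they are
equal. So `x` occurs at most `t - 1` times in the factor, and `1`, alternating with `x`, at most
`t` times.
-/

section Leads

open List

variable {V : Type*} [DecidableEq V]

/-- `x` leads `y` in `w` when the occurrences of `x` and `y` in `w` read `x y x y …`,
expressed through the counts in every prefix. -/
def Leads (w : List V) (x y : V) : Prop :=
  ∀ p, (w.take p).count y ≤ (w.take p).count x ∧ (w.take p).count x ≤ (w.take p).count y + 1

theorem filter_eq_or_comm (w : List V) (x y : V) :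
    (w.filter fun z => decide (z = x ∨ z = y)) = w.filter fun z => decide (z = y ∨ z = x) := by
  simp only [or_comm]

theorem leads_cons_self {w : List V} {x y : V} (hxy : x ≠ y) :
    Leads (x :: w) x y ↔ Leads w y x := by
  constructor
  · intro h p
    have := h (p + 1)
    simp only [take_succ_cons, count_cons_self, count_cons_of_ne hxy] at this
    omega
  · rintro h (_ | p)
    · simp
    · have := h p
      simp only [take_succ_cons, count_cons_self, count_cons_of_ne hxy]
      omega

theorem not_leads_cons_right {w : List V} {x y : V} (hxy : x ≠ y) : ¬ Leads (y :: w) x y :=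
  fun h => hxy (by simpa using (h 1).1)

theorem leads_cons_of_ne {w : List V} {d x y : V} (hx : d ≠ x) (hy : d ≠ y) :
    Leads (d :: w) x y ↔ Leads w x y := by
  constructor
  · intro h p
    simpa [count_cons_of_ne hx, count_cons_of_ne hy] using h (p + 1)
  · rintro h (_ | p)
    · simp
    · simpa [count_cons_of_ne hx, count_cons_of_ne hy] using h p

theorem leads_iff_isChain {w : List V} {x y : V} (hxy : x ≠ y) :
    Leads w x y ↔ (y :: w.filter fun z => decide (z = x ∨ z = y)).IsChain (· ≠ ·) := by
  induction w generalizing x y with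
  | nil => simp [Leads]
  | cons d w ih =>
    by_cases hdx : d = x
    · subst hdx
      rw [leads_cons_self hxy, ih hxy.symm, filter_cons_of_pos (by simp), filter_eq_or_comm,
        isChain_cons_cons]
      simp [Ne.symm hxy]
    by_cases hdy : d = y
    · subst hdy
      simp [not_leads_cons_right hxy]
    rw [leads_cons_of_ne hdx hdy, ih hxy, filter_cons_of_neg (by simp [hdx, hdy])]

theorem Alternate.leads_or_leads {w : List V} {x y : V} (h : Alternate w x y) (hxy : x ≠ y) :
    Leads w x y ∨ Leads w y x := by
  rw [leads_iff_isChain hxy, leads_iff_isChain hxy.symm, filter_eq_or_comm w y x, isChain_cons,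
    isChain_cons]
  have hchain : (w.filter fun z => decide (z = x ∨ z = y)).IsChain (· ≠ ·) := h
  rcases hhead : (w.filter fun z => decide (z = x ∨ z = y)).head? with _ | z
  · exact .inl ⟨by simp, hchain⟩
  · have hz := of_mem_filter (mem_of_mem_head? hhead)
    simp only [decide_eq_true_eq] at hz
    rcases hz with rfl | rfl
    · exact .inl ⟨by simpa using hxy.symm, hchain⟩
    · exact .inr ⟨by simpa using hxy, hchain⟩

theorem Leads.alternate {w : List V} {x y : V} (h : Leads w x y) (hxy : x ≠ y) :
    Alternate w x y :=
  ((leads_iff_isChain hxy).1 h).tail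

theorem count_take_succ_of_getElem? {w : List V} {p : ℕ} {d : V} (hp : w[p]? = some d) (a : V) :
    (w.take (p + 1)).count a = (w.take p).count a + if d = a then 1 else 0 := by
  rw [take_add_one, hp, count_append]
  split_ifs with h <;> simp [h]

theorem Leads.count_take_of_getElem?_left {w : List V} {x y : V} (h : Leads w x y) (hxy : x ≠ y)
    {p : ℕ} (hp : w[p]? = some x) : (w.take p).count x = (w.take p).count y := by
  have := h (p + 1)
  rw [count_take_succ_of_getElem? hp, count_take_succ_of_getElem? hp, if_pos rfl,
    if_neg hxy] at this
  have := h p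
  omega

theorem Leads.count_take_of_getElem?_right {w : List V} {x y : V} (h : Leads w x y)
    (hxy : x ≠ y) {p : ℕ} (hp : w[p]? = some y) :
    (w.take p).count x = (w.take p).count y + 1 := by
  have := h (p + 1)
  rw [count_take_succ_of_getElem? hp, count_take_succ_of_getElem? hp, if_pos rfl,
    if_neg hxy.symm] at this
  have := h p
  omega

theorem count_take_eq_count_take_add_count_drop_take (w : List V) {p q : ℕ} (hpq : p ≤ q)
    (a : V) : (w.take q).count a = (w.take p).count a + ((w.take q).drop p).count a := by
  conv_lhs => rw [← take_append_drop p (w.take q)]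
  rw [count_append, take_take, min_eq_left hpq]

theorem Alternate.count_drop_take_le {w : List V} {x y : V} (h : Alternate w x y) (hxy : x ≠ y)
    (p q : ℕ) : ((w.take q).drop p).count x ≤ ((w.take q).drop p).count y + 1 := by
  by_cases hpq : p ≤ q
  · have hx := count_take_eq_count_take_add_count_drop_take w hpq x
    have hy := count_take_eq_count_take_add_count_drop_take w hpq y
    rcases h.leads_or_leads hxy with hl | hl
    · have := hl p; have := hl q; omega
    · have := hl p; have := hl q; omega
  · rw [drop_eq_nil_of_le (by grind)]
    simp

theorem count_drop_take_add_count_take_le {w : List V} {a x b₁ b₂ : V} {s e : ℕ}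
    (hs : w[s]? = some b₁) (he : w[e]? = some b₂) (hse : s ≤ e)
    (ha : Alternate w a x) (hax : a ≠ x) (h₁ : Alternate w b₁ x) (hb₁x : b₁ ≠ x)
    (h₂ : Alternate w b₂ x) (hb₂x : b₂ ≠ x) (hb₁₂ : b₁ ≠ b₂ → ¬ Alternate w b₁ b₂)
    (hbal : ∀ p, (w.take p).count b₁ ≤ (w.take p).count b₂ + 1) :
    ((w.take (e + 1)).drop s).count a + (w.take s).count b₁ ≤ (w.take (e + 1)).count b₂ := by
  have hsplit := count_take_eq_count_take_add_count_drop_take w (by omega : s ≤ e + 1)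
  have hx := hsplit x
  have hfactor := ha.count_drop_take_le hax s (e + 1)
  have hxe := count_take_succ_of_getElem? he x
  have hb₂e := count_take_succ_of_getElem? he b₂
  rw [if_neg hb₂x] at hxe
  rw [if_pos rfl] at hb₂e
  rcases h₁.leads_or_leads hb₁x with L₁ | L₁ <;> rcases h₂.leads_or_leads hb₂x with L₂ | L₂
  · have := L₁.count_take_of_getElem?_left hb₁x hs
    have := L₂.count_take_of_getElem?_left hb₂x he
    omega
  · -- `b₁ x b₁ x …` and `x b₂ x b₂ …` would make `b₁` and `b₂` alternate
    exfalso
    by_cases hb : b₁ = b₂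
    · subst hb
      have := L₁.count_take_of_getElem?_left hb₁x hs
      have := L₂.count_take_of_getElem?_right hb₁x.symm hs
      omega
    · exact hb₁₂ hb (Leads.alternate (fun p => ⟨(L₂ p).1.trans (L₁ p).1, hbal p⟩) hb)
  · have := L₁.count_take_of_getElem?_right hb₁x.symm hs
    have := L₂.count_take_of_getElem?_left hb₂x he
    omega
  · have := L₁.count_take_of_getElem?_right hb₁x.symm hs
    have := L₂.count_take_of_getElem?_right hb₂x.symm he
    omega

end Leads

section PermBlocks

open List

variable {V : Type*} [DecidableEq V]

theorem IsPermOf.length_eq {P : List V} {A : Finset V} (h : IsPermOf P A) :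
    P.length = A.card := by
  have htoFinset : P.toFinset = A := by
    ext a
    rw [mem_toFinset]
    exact ⟨h.2 a, fun ha => count_pos_iff.1 (by rw [h.1 a ha]; omega)⟩
  rw [← sum_toFinset_count_eq_length, htoFinset, Finset.sum_congr rfl h.1, Finset.sum_const,
    smul_eq_mul, mul_one]

variable {bs : List (List V)} {A : Finset V}

theorem length_flatten_of_isPermOf (hbs : ∀ l ∈ bs, IsPermOf l A) :
    bs.flatten.length = bs.length * A.card := by
  induction bs with
  | nil => simp
  | cons l bs ih =>
    rw [flatten_cons, length_append, (hbs l mem_cons_self).length_eq,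
      ih fun l hl => hbs l (mem_cons_of_mem _ hl), length_cons]
    ring

theorem count_take_flatten_le_add_one (hbs : ∀ l ∈ bs, IsPermOf l A) {c d : V} (hc : c ∈ A)
    (hd : d ∈ A) (m : ℕ) : (bs.flatten.take m).count c ≤ (bs.flatten.take m).count d + 1 := by
  induction bs generalizing m with
  | nil => simp
  | cons l bs ih =>
    have hl := hbs l mem_cons_self
    rw [flatten_cons, take_append, count_append, count_append]
    by_cases hm : m ≤ l.length
    · have := (take_sublist m l).count_le c
      rw [Nat.sub_eq_zero_of_le hm, take_zero, hl.1 c hc] at *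
      simp only [count_nil]
      omega
    · rw [take_of_length_le (by omega), hl.1 c hc, hl.1 d hd]
      have := ih (fun l hl => hbs l (mem_cons_of_mem _ hl)) (m - l.length)
      omega

theorem count_take_mul_card_flatten (hbs : ∀ l ∈ bs, IsPermOf l A) {c : V} (hc : c ∈ A)
    {q : ℕ} (hq : q ≤ bs.length) : (bs.flatten.take (q * A.card)).count c = q := by
  induction bs generalizing q with
  | nil => simp_all
  | cons l bs ih =>
    rcases q with _ | q
    · simp
    have hl := hbs l mem_cons_self
    rw [flatten_cons, take_append, take_of_length_le (by rw [hl.length_eq]; nlinarith),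
      count_append, hl.1 c hc, hl.length_eq, show (q + 1) * A.card - A.card = q * A.card by
        rw [add_one_mul, Nat.add_sub_cancel],
      ih (fun l hl => hbs l (mem_cons_of_mem _ hl)) (by simpa using hq)]
    omega

end PermBlocks

section Positions

open List

variable {V : Type*} {w : List V} {p : V → Bool} {m : ℕ}

theorem filter_range_length_eq_findIdxs (w : List V) (p : V → Bool) :
    ((range w.length).filter fun q => w[q]?.any p) = w.findIdxs p := by
  induction w with
  | nil => simp
  | cons d w ih =>
    rw [length_cons, range_succ_eq_map, filter_cons, filter_map, findIdxs_cons, findIdxs_start,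
      ← ih]
    simp [Function.comp_def]

theorem nthPosWhere_eq_findIdxNth (hm : m < w.countP p) :
    nthPosWhere w p m = w.findIdxNth p m := by
  rw [nthPosWhere, filter_range_length_eq_findIdxs, getD_eq_getElem _ _ (by simpa),
    getElem_findIdxs_eq_findIdxNth]

theorem countP_take_findIdxNth (hm : m < w.countP p) :
    (w.take (w.findIdxNth p m)).countP p = m := by
  induction w generalizing m with
  | nil => simp at hm
  | cons d w ih =>
    rcases m with _ | m <;> cases hd : p d <;> simp_all [findIdxNth_cons]

theorem countP_take_findIdxNth_add_one (hm : m < w.countP p) :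
    (w.take (w.findIdxNth p m + 1)).countP p = m + 1 := by
  have hlt := findIdxNth_lt_length_of_lt_countP hm
  rw [take_add_one, countP_append, countP_take_findIdxNth hm, getElem?_eq_getElem hlt]
  simp [pos_findIdxNth_getElem]

theorem filter_take_eq_take_filter (w : List V) (p : V → Bool) (q : ℕ) :
    (w.take q).filter p = (w.filter p).take ((w.take q).countP p) := by
  rw [countP_eq_length_filter]
  exact prefix_iff_eq_take.1 ((take_prefix q w).filter p)

theorem count_take_eq_count_take_filter [DecidableEq V] {c : V} (hc : p c) (q : ℕ) :
    (w.take q).count c = ((w.filter p).take ((w.take q).countP p)).count c := by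
  rw [← filter_take_eq_take_filter, count_filter hc]

end Positions

section BlockWords

open List

variable {V : Type*} [DecidableEq V]

theorem count_drop_take_le_of_isPermOf_blocks {w : List V} {B : Finset V} {bs : List (List V)}
    {a : V} {i t : ℕ} (hB : B.Nonempty)
    (hblocks : w.filter (fun z => decide (z ∈ B)) = bs.flatten) (hperm : ∀ l ∈ bs, IsPermOf l B)
    (hsep : ∀ b₁ ∈ B, ∀ b₂ ∈ B, b₁ ≠ b₂ → ¬ Alternate w b₁ b₂)
    (hpartner : ∀ b₁ ∈ B, ∀ b₂ ∈ B, ∃ x, a ≠ x ∧ b₁ ≠ x ∧ b₂ ≠ x ∧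
      Alternate w a x ∧ Alternate w b₁ x ∧ Alternate w b₂ x)
    (ht : 1 ≤ t) (hi : 1 ≤ i) (hit : i + t - 1 ≤ bs.length) :
    ((w.take (nthPosWhere w (fun z => decide (z ∈ B)) ((i + t - 1) * B.card - 1) + 1)).drop
        (nthPosWhere w (fun z => decide (z ∈ B)) ((i - 1) * B.card))).count a ≤ t := by
  set g : V → Bool := fun z => decide (z ∈ B)
  have hN := hB.card_pos
  have hstart : (i - 1) * B.card + B.card ≤ (i + t - 1) * B.card := by
    rw [← add_one_mul]; exact Nat.mul_le_mul_right _ (by omega)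
  have hend : (i + t - 1) * B.card ≤ w.countP g := by
    rw [countP_eq_length_filter, hblocks, length_flatten_of_isPermOf hperm]
    exact Nat.mul_le_mul_right _ hit
  have hlt : (i + t - 1) * B.card - 1 < w.countP g := by omega
  have hle : (i - 1) * B.card ≤ (i + t - 1) * B.card - 1 := by omega
  rw [nthPosWhere_eq_findIdxNth (hle.trans_lt hlt), nthPosWhere_eq_findIdxNth hlt]
  set s := w.findIdxNth g ((i - 1) * B.card)
  set e := w.findIdxNth g ((i + t - 1) * B.card - 1)
  have hs : s < w.length := findIdxNth_lt_length_of_lt_countP (hle.trans_lt hlt)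
  have he : e < w.length := findIdxNth_lt_length_of_lt_countP hlt
  have hg₁ : g w[s] := pos_findIdxNth_getElem
  have hg₂ : g w[e] := pos_findIdxNth_getElem
  have hb₁ : w[s] ∈ B := by simpa [g] using hg₁
  have hb₂ : w[e] ∈ B := by simpa [g] using hg₂
  have hcount_s : (w.take s).count w[s] = i - 1 := by
    rw [count_take_eq_count_take_filter hg₁, countP_take_findIdxNth (hle.trans_lt hlt), hblocks,
      count_take_mul_card_flatten hperm hb₁ (by omega)]
  have hcount_e : (w.take (e + 1)).count w[e] = i + t - 1 := by
    rw [count_take_eq_count_take_filter hg₂,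
      countP_take_findIdxNth_add_one hlt, Nat.sub_add_cancel (by omega), hblocks,
      count_take_mul_card_flatten hperm hb₂ hit]
  have hbal : ∀ q, (w.take q).count w[s] ≤ (w.take q).count w[e] + 1 := by
    intro q
    rw [count_take_eq_count_take_filter hg₁, count_take_eq_count_take_filter hg₂, hblocks]
    exact count_take_flatten_le_add_one hperm hb₁ hb₂ _
  obtain ⟨x, hax, hb₁x, hb₂x, ha, h₁, h₂⟩ := hpartner _ hb₁ _ hb₂
  have := count_drop_take_add_count_take_le (getElem?_eq_getElem hs) (getElem?_eq_getElem he)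
    (findIdxNth_mono hle) ha hax h₁ hb₁x h₂ hb₂x (hsep _ hb₁ _ hb₂) hbal
  omega

end BlockWords

section Crown

open Sum

theorem crown_adj_inl_inr {n : ℕ} {i j : Fin n} : (Crown n).Adj (inl i) (inr j) ↔ i ≠ j := by
  simp [Crown]

theorem crown_not_adj_inl_inl {n : ℕ} {i j : Fin n} : ¬ (Crown n).Adj (inl i) (inl j) := by
  simp [Crown]

theorem crown_exists_inr_adj {n : ℕ} (s : Finset (Fin n)) (hs : s.card < n) :
    ∃ j, ∀ i ∈ s, (Crown n).Adj (inl i) (inr j) := by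
  obtain ⟨j, hj⟩ : ∃ j, j ∉ s := by
    by_contra! h
    have := Finset.card_le_card (fun j _ => h j : Finset.univ ⊆ s)
    simp at this
    omega
  exact ⟨j, fun i hi => crown_adj_inl_inr.2 (ne_of_mem_of_not_mem hi hj)⟩

end Crown

theorem Finset.card_univ_filter_isLeft {α β : Type*} [Fintype α] [Fintype β] :
    (Finset.univ.filter fun z : α ⊕ β => z.isLeft).card = Fintype.card α := by
  rw [show (Finset.univ.filter fun z : α ⊕ β => z.isLeft) = Finset.univ.map .inl by
    ext z; cases z <;> simp]
  simp

/-- `List.count` on `Fin n ⊕ Fin n` elaborates with the derived `BEq` instance of `Sum`, not with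
the one coming from `DecidableEq`. -/
theorem Sum.instBEq_eq_instBEqOfDecidableEq {α β : Type*} [DecidableEq α] [DecidableEq β] :
    (Sum.instBEq : BEq (α ⊕ β)) = instBEqOfDecidableEq := by
  have hbeq : (Sum.instBEq : BEq (α ⊕ β)).beq = fun x y => decide (x = y) := by
    funext x y
    rcases x with a | a <;> rcases y with b | b
    · show (a == b) = _
      simp only [Sum.inl.injEq]
      rfl
    · rfl
    · rfl
    · show (a == b) = _
      simp only [Sum.inr.injEq]
      rfl
  exact congrArg BEq.mk hbeq

/-- Claim 1 in the proof of Lemma 2: let `n ≥ 5`, let `w` be a `k`-uniform word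
representing `H_{n,n}` whose first letter belongs to `B = {2, …, n}`, and suppose
the subword of `w` induced by `B` is a concatenation `P′₁ ⋯ P′_k` of permutations
of `B`.  Then for all `t ≥ 1`, `i ≥ 1` with `i + t - 1 ≤ k`, the factor of `w`
starting at the first letter of `P′_i` and ending at the last letter of
`P′_{i+t-1}` contains at most `t` occurrences of the letter `1`.  (The first
letter of `P′_i` is the `((i-1)(n-1)+1)`-st letter of `w` lying in `B`, and the
last letter of `P′_{i+t-1}` is the `((i+t-1)(n-1))`-th such letter.) -/
theorem crown_claim_one (n k : ℕ) (hn : 5 ≤ n)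
    (w : List (Fin n ⊕ Fin n)) (hrep : Represents w (Crown n))
    (one : Fin n ⊕ Fin n) (hone : one = Sum.inl ⟨0, by omega⟩)
    (B : Finset (Fin n ⊕ Fin n))
    (hB : B = (Finset.univ.filter fun z => z.isLeft) \ {one})
    (P : Fin k → List (Fin n ⊕ Fin n)) (hP : ∀ i, IsPermOf (P i) B)
    (hind : (w.filter fun z => decide (z ∈ B)) = (List.ofFn P).flatten)
    (t i : ℕ) (ht : 1 ≤ t) (hi : 1 ≤ i) (hit : i + t - 1 ≤ k) :
    ((w.take (nthPosWhere w (fun z => decide (z ∈ B)) ((i + t - 1) * (n - 1) - 1) + 1)).drop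
        (nthPosWhere w (fun z => decide (z ∈ B)) ((i - 1) * (n - 1)))).count one ≤ t := by
  subst hone
  have hleft : ∀ b ∈ B, ∃ a, b = Sum.inl a := by
    rintro (a | a) hb
    · exact ⟨a, rfl⟩
    · simp [hB] at hb
  have hcard : B.card = n - 1 := by
    rw [hB, Finset.card_sdiff_of_subset (by simp), Finset.card_singleton,
      Finset.card_univ_filter_isLeft, Fintype.card_fin]
  rw [Sum.instBEq_eq_instBEqOfDecidableEq, ← hcard]
  refine count_drop_take_le_of_isPermOf_blocks ⟨Sum.inl ⟨1, by omega⟩, by simp [hB]⟩ hind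
    (by simpa [List.mem_ofFn] using hP) ?_ ?_ ht hi (by simpa using hit)
  · rintro b₁ hb₁ b₂ hb₂ hne halt
    obtain ⟨a₁, rfl⟩ := hleft b₁ hb₁
    obtain ⟨a₂, rfl⟩ := hleft b₂ hb₂
    exact crown_not_adj_inl_inl ((hrep.2 _ _ hne).2 halt)
  · intro b₁ hb₁ b₂ hb₂
    obtain ⟨a₁, rfl⟩ := hleft b₁ hb₁
    obtain ⟨a₂, rfl⟩ := hleft b₂ hb₂
    obtain ⟨j, hj⟩ := crown_exists_inr_adj {⟨0, by omega⟩, a₁, a₂}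
      ((Finset.card_le_three).trans_lt (by omega))
    refine ⟨Sum.inr j, by simp, by simp, by simp, ?_, ?_, ?_⟩ <;>
      exact (hrep.2 _ _ (by simp)).1 (hj _ (by simp))
end
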